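/- If a bunch Γ₂ is an essence of Γ₁ then Γ₁ ⪯ Γ₂ in the preorder generated by weakening and the insertion of multiplicative-unit components; consequently, for any context Γ(-) and formula H, LBI derives Γ(E(Γ₁)) ⊢ H from Γ(Γ₁) ⊢ H by finitely many applications of Wk L and EqAnt₂. -/

import Mathlib

/-- BI formulas: propositional variables, ⊤, ⊥, ⊤*, ∧, ∨, ⊃, *, −∗. -/
inductive BI : Type
  | var : Nat → BI
  | top : BI
  | bot : BI
  | mtop : BI
  | conj : BI → BI → BI
  | disj : BI → BI → BI
  | imp : BI → BI → BI
  | star : BI → BI → BI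
  | wand : BI → BI → BI

/-- Bunches (BI structures): Γ := F | Γ; Γ | Γ, Γ. -/
inductive Bunch : Type
  | fm : BI → Bunch
  | semi : Bunch → Bunch → Bunch   -- additive ';'
  | comma : Bunch → Bunch → Bunch  -- multiplicative ','

/-- Structural congruence: full associativity and commutativity of ';' and ','. -/
inductive BunchEq : Bunch → Bunch → Prop
  | refl (Γ : Bunch) : BunchEq Γ Γ
  | symm {a b} : BunchEq a b → BunchEq b a
  | trans {a b c} : BunchEq a b → BunchEq b c → BunchEq a c
  | semiComm (a b : Bunch) : BunchEq (.semi a b) (.semi b a)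
  | semiAssoc (a b c : Bunch) : BunchEq (.semi (.semi a b) c) (.semi a (.semi b c))
  | commaComm (a b : Bunch) : BunchEq (.comma a b) (.comma b a)
  | commaAssoc (a b c : Bunch) : BunchEq (.comma (.comma a b) c) (.comma a (.comma b c))
  | semiCongr {a a' b b'} : BunchEq a a' → BunchEq b b' → BunchEq (.semi a b) (.semi a' b')
  | commaCongr {a a' b b'} : BunchEq a a' → BunchEq b b' → BunchEq (.comma a b) (.comma a' b')

/-- Bunched contexts with a single hole. -/
inductive Ctx : Type
  | hole : Ctx
  | semiL : Ctx → Bunch → Ctx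
  | semiR : Bunch → Ctx → Ctx
  | commaL : Ctx → Bunch → Ctx
  | commaR : Bunch → Ctx → Ctx

/-- Filling the hole of a context with a bunch. -/
def Ctx.fill : Ctx → Bunch → Bunch
  | .hole, Δ => Δ
  | .semiL C Γ, Δ => .semi (C.fill Δ) Γ
  | .semiR Γ C, Δ => .semi Γ (C.fill Δ)
  | .commaL C Γ, Δ => .comma (C.fill Δ) Γ
  | .commaR Γ C, Δ => .comma Γ (C.fill Δ)

/-- `osemi Γ̃ Δ` is `Γ̃; Δ`, where `Γ̃` may be empty. -/
def osemi : Option Bunch → Bunch → Bunch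
  | none, b => b
  | some a, b => .semi a b

/-- `ocomma Γ̃ Δ` is `Γ̃, Δ`, where `Γ̃` may be empty. -/
def ocomma : Option Bunch → Bunch → Bunch
  | none, b => b
  | some a, b => .comma a b

/-- The weakening preorder ⪯ on bunches: smallest reflexive (up to structural
congruence) and transitive relation with Γ(Δ) ⪯ Γ(Δ; Γ'). -/
inductive Wle : Bunch → Bunch → Prop
  | ofEq {a b} : BunchEq a b → Wle a b
  | weak (C : Ctx) (Δ Γ' : Bunch) : Wle (C.fill Δ) (C.fill (.semi Δ Γ'))
  | trans {a b c} : Wle a b → Wle b c → Wle a c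

/-- `(⊤*; Γ̃)` where `Γ̃` is possibly empty. -/
def mte : Option Bunch → Bunch
  | none => .fm .mtop
  | some Δ => .semi (.fm .mtop) Δ

/-- `Essence Γ₁ Γ₂` : Γ₂ is an essence of Γ₁. -/
inductive Essence : Bunch → Bunch → Prop
  | ofEq {a b} : BunchEq a b → Essence a b
  | insert {a} (C : Ctx) (Γ' : Bunch) (Δ : Option Bunch) :
      Essence a (C.fill Γ') → Essence a (C.fill (.comma Γ' (mte Δ)))
  | insertSemi {a} (C : Ctx) (Γ' Γ'' : Bunch) (Δ : Option Bunch) :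
      Essence a (C.fill (.semi Γ' Γ'')) →
      Essence a (C.fill (.semi (.comma Γ' (mte Δ)) Γ''))
  | congr {a b c} : Essence a b → BunchEq b c → Essence a c

/-- `Candidate Γ R₁ R₂` : (R₁, R₂) is a candidate of Γ. -/
def Candidate (Γ R₁ R₂ : Bunch) : Prop :=
  (R₂ = .fm .mtop ∧ Wle R₁ Γ) ∨ Wle (.comma R₁ R₂) Γ

/-- The representing preorder ⪯̂. -/
inductive RWle : Bunch → Bunch → Prop
  | ofEq {a b} : BunchEq a b → RWle a b
  | weak (a b : Bunch) : RWle a (.semi a b)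
  | weakComma (a b c : Bunch) : RWle (.comma a b) (.comma a (.semi b c))
  | trans {a b c} : RWle a b → RWle b c → RWle a c

/-- `RepCandidate Γ R₁ R₂` : (R₁, R₂) is a representing candidate of Γ. -/
def RepCandidate (Γ R₁ R₂ : Bunch) : Prop :=
  (R₂ = .fm .mtop ∧ RWle R₁ Γ) ∨ RWle (.comma R₁ R₂) Γ

/-- The LBIZ sequent calculus (parametrised by the candidate relation used in
*R and −∗L, and by whether the Cut rule is available), with derivation depth.
There are no structural rules; bunches are identified up to
associativity/commutativity via the depth-neutral `equiv` rule. -/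
inductive LBIZ (Cand : Bunch → Bunch → Bunch → Prop) (cut : Bool) :
    Bunch → BI → Nat → Prop
  | id (Γt : Option Bunch) (p : Nat) {Δ : Bunch} :
      Essence (osemi Γt (.fm (.var p))) Δ → LBIZ Cand cut Δ (.var p) 1
  | botL (C : Ctx) (H : BI) : LBIZ Cand cut (C.fill (.fm .bot)) H 1
  | topR (Γ : Bunch) : LBIZ Cand cut Γ .top 1
  | mtopR (Γt : Option Bunch) {Δ : Bunch} :
      Essence (osemi Γt (.fm .mtop)) Δ → LBIZ Cand cut Δ .mtop 1
  | conjL {C : Ctx} {F G H n} :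
      LBIZ Cand cut (C.fill (.semi (.fm F) (.fm G))) H n →
      LBIZ Cand cut (C.fill (.fm (.conj F G))) H (n + 1)
  | conjR {Γ F G n m} :
      LBIZ Cand cut Γ F n → LBIZ Cand cut Γ G m →
      LBIZ Cand cut Γ (.conj F G) (max n m + 1)
  | disjL {C : Ctx} {F G H n m} :
      LBIZ Cand cut (C.fill (.fm F)) H n → LBIZ Cand cut (C.fill (.fm G)) H m →
      LBIZ Cand cut (C.fill (.fm (.disj F G))) H (max n m + 1)
  | disjR₁ {Γ F G n} : LBIZ Cand cut Γ F n → LBIZ Cand cut Γ (.disj F G) (n + 1)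
  | disjR₂ {Γ F G n} : LBIZ Cand cut Γ G n → LBIZ Cand cut Γ (.disj F G) (n + 1)
  | impL (Γt : Option Bunch) {F G : BI} {Δ : Bunch} {C : Ctx} {H n m} :
      Essence (osemi Γt (.fm (.imp F G))) Δ →
      LBIZ Cand cut Δ F n →
      LBIZ Cand cut (C.fill (.semi (.fm G) Δ)) H m →
      LBIZ Cand cut (C.fill Δ) H (max n m + 1)
  | impR {Γ F G n} :
      LBIZ Cand cut (.semi Γ (.fm F)) G n → LBIZ Cand cut Γ (.imp F G) (n + 1)
  | starL {C : Ctx} {F G H n} :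
      LBIZ Cand cut (C.fill (.comma (.fm F) (.fm G))) H n →
      LBIZ Cand cut (C.fill (.fm (.star F G))) H (n + 1)
  | starR {Γ' R₁ R₂ : Bunch} {F G n m} :
      (Cand Γ' R₁ R₂ ∨ Cand Γ' R₂ R₁) →
      LBIZ Cand cut R₁ F n → LBIZ Cand cut R₂ G m →
      LBIZ Cand cut Γ' (.star F G) (max n m + 1)
  | wandL (Γ'o Rej : Option Bunch) (Rei : Bunch) (Γt : Option Bunch)
      {F G : BI} {Δ : Bunch} {C : Ctx} {H n m} :
      Essence (osemi Γt (.fm (.wand F G))) Δ →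
      ((Γ'o = none ∧ Rei = .fm .mtop ∧ Rej = none) ∨
        (∃ Γ' Rj, Γ'o = some Γ' ∧ Rej = some Rj ∧
          (Cand Γ' Rei Rj ∨ Cand Γ' Rj Rei))) →
      LBIZ Cand cut Rei F n →
      LBIZ Cand cut (C.fill (.semi (ocomma Rej (.fm G)) (ocomma Γ'o Δ))) H m →
      LBIZ Cand cut (C.fill (ocomma Γ'o Δ)) H (max n m + 1)
  | wandR {Γ F G n} :
      LBIZ Cand cut (.comma Γ (.fm F)) G n → LBIZ Cand cut Γ (.wand F G) (n + 1)
  | equiv {Γ Γ' H n} : BunchEq Γ Γ' → LBIZ Cand cut Γ H n → LBIZ Cand cut Γ' H n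
  | cutRule {Γ₁ : Bunch} {F : BI} {C : Ctx} {G n m} :
      cut = true →
      LBIZ Cand cut Γ₁ F n → LBIZ Cand cut (C.fill (.fm F)) G m →
      LBIZ Cand cut (C.fill Γ₁) G (max n m + 1)

/-- LBIZ proper: candidate relation `Candidate`, no Cut. -/
abbrev LBIZc : Bunch → BI → Nat → Prop := LBIZ Candidate false

/-- The LBI sequent calculus (without Cut), parametrised by whether contraction
is available for arbitrary bunches (`full = true`) or only for single formulas. -/
inductive LBIg (full : Bool) : Bunch → BI → Prop
  | id (F : BI) : LBIg full (.fm F) F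
  | botL (C : Ctx) (H : BI) : LBIg full (C.fill (.fm .bot)) H
  | topR (Γ : Bunch) : LBIg full Γ .top
  | mtopR : LBIg full (.fm .mtop) .mtop
  | conjL {C : Ctx} {F G H} :
      LBIg full (C.fill (.semi (.fm F) (.fm G))) H →
      LBIg full (C.fill (.fm (.conj F G))) H
  | conjR {Γ F G} : LBIg full Γ F → LBIg full Γ G → LBIg full Γ (.conj F G)
  | disjL {C : Ctx} {F G H} :
      LBIg full (C.fill (.fm F)) H → LBIg full (C.fill (.fm G)) H →
      LBIg full (C.fill (.fm (.disj F G))) H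
  | disjR₁ {Γ F G} : LBIg full Γ F → LBIg full Γ (.disj F G)
  | disjR₂ {Γ F G} : LBIg full Γ G → LBIg full Γ (.disj F G)
  | impL {Γ₁ : Bunch} {C : Ctx} {F G H} :
      LBIg full Γ₁ F → LBIg full (C.fill (.semi Γ₁ (.fm G))) H →
      LBIg full (C.fill (.semi Γ₁ (.fm (.imp F G)))) H
  | impR {Γ F G} : LBIg full (.semi Γ (.fm F)) G → LBIg full Γ (.imp F G)
  | starL {C : Ctx} {F G H} :
      LBIg full (C.fill (.comma (.fm F) (.fm G))) H →
      LBIg full (C.fill (.fm (.star F G))) H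
  | starR {Γ₁ Γ₂ F G} :
      LBIg full Γ₁ F → LBIg full Γ₂ G → LBIg full (.comma Γ₁ Γ₂) (.star F G)
  | wandL {Γ₁ : Bunch} {C : Ctx} {F G H} :
      LBIg full Γ₁ F → LBIg full (C.fill (.fm G)) H →
      LBIg full (C.fill (.comma Γ₁ (.fm (.wand F G)))) H
  | wandR {Γ F G} : LBIg full (.comma Γ (.fm F)) G → LBIg full Γ (.wand F G)
  | wk {C : Ctx} {Γ₁ Γ₂ H} :
      LBIg full (C.fill Γ₁) H → LBIg full (C.fill (.semi Γ₁ Γ₂)) H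
  | ctr {C : Ctx} {Γ₁ H} :
      (full = true ∨ ∃ A, Γ₁ = .fm A) →
      LBIg full (C.fill (.semi Γ₁ Γ₁)) H → LBIg full (C.fill Γ₁) H
  | eqAnt1a {C : Ctx} {Γ₁ H} :
      LBIg full (C.fill (.semi Γ₁ (.fm .top))) H → LBIg full (C.fill Γ₁) H
  | eqAnt1b {C : Ctx} {Γ₁ H} :
      LBIg full (C.fill Γ₁) H → LBIg full (C.fill (.semi Γ₁ (.fm .top))) H
  | eqAnt2a {C : Ctx} {Γ₁ H} :
      LBIg full (C.fill (.comma Γ₁ (.fm .mtop))) H → LBIg full (C.fill Γ₁) H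
  | eqAnt2b {C : Ctx} {Γ₁ H} :
      LBIg full (C.fill Γ₁) H → LBIg full (C.fill (.comma Γ₁ (.fm .mtop))) H
  | equiv {Γ Γ' H} : BunchEq Γ Γ' → LBIg full Γ H → LBIg full Γ' H

/-- LBI with unrestricted (structural) contraction. -/
abbrev LBI : Bunch → BI → Prop := LBIg true

/-- One application of the LBI weakening rule Wk L on a sequent
(also allowing structural-congruence adjustments). -/
inductive WkStep : Bunch × BI → Bunch × BI → Prop
  | step (C : Ctx) (Δ Γ' : Bunch) (H : BI) :
      WkStep (C.fill Δ, H) (C.fill (.semi Δ Γ'), H)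
  | equiv {Γ₁ Γ₂ : Bunch} (H : BI) : BunchEq Γ₁ Γ₂ → WkStep (Γ₁, H) (Γ₂, H)

/-- One application of Wk L or of either direction of EqAnt₂ on a sequent. -/
inductive WkEq2Step : Bunch × BI → Bunch × BI → Prop
  | wk (C : Ctx) (Δ Γ' : Bunch) (H : BI) :
      WkEq2Step (C.fill Δ, H) (C.fill (.semi Δ Γ'), H)
  | eq2a (C : Ctx) (Γ₁ : Bunch) (H : BI) :
      WkEq2Step (C.fill (.comma Γ₁ (.fm .mtop)), H) (C.fill Γ₁, H)
  | eq2b (C : Ctx) (Γ₁ : Bunch) (H : BI) :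
      WkEq2Step (C.fill Γ₁, H) (C.fill (.comma Γ₁ (.fm .mtop)), H)
  | equiv {Γ₁ Γ₂ : Bunch} (H : BI) : BunchEq Γ₁ Γ₂ → WkEq2Step (Γ₁, H) (Γ₂, H)

/-- The preorder generated by weakening together with insertion of
multiplicative-unit components. -/
inductive WleM : Bunch → Bunch → Prop
  | ofEq {a b} : BunchEq a b → WleM a b
  | weak (C : Ctx) (Δ Γ' : Bunch) : WleM (C.fill Δ) (C.fill (.semi Δ Γ'))
  | munit (C : Ctx) (Δ : Bunch) : WleM (C.fill Δ) (C.fill (.comma Δ (.fm .mtop)))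
  | trans {a b c} : WleM a b → WleM b c → WleM a c

/-!
Inserting a multiplicative-unit component `Γ' ↦ Γ', (⊤*; Δ)` is one EqAnt₂ step
`Γ' ↦ Γ', ⊤*` followed by the weakening `⊤* ↦ ⊤*; Δ`. Both steps may be performed
inside any context, so every essence step is a composite of `WleM` generators, and every
`WleM` generator is a single `WkEq2Step` on sequents.
-/

def Ctx.comp : Ctx → Ctx → Ctx
  | .hole, D => D
  | .semiL C Γ, D => .semiL (C.comp D) Γ
  | .semiR Γ C, D => .semiR Γ (C.comp D)
  | .commaL C Γ, D => .commaL (C.comp D) Γ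
  | .commaR Γ C, D => .commaR Γ (C.comp D)

@[simp]
theorem Ctx.fill_comp (C D : Ctx) (Δ : Bunch) :
    (C.comp D).fill Δ = C.fill (D.fill Δ) := by
  induction C with
  | hole => rfl
  | semiL C Γ ih | semiR Γ C ih | commaL C Γ ih | commaR Γ C ih =>
    simp only [Ctx.comp, Ctx.fill, ih]

theorem BunchEq.fill {a b : Bunch} (h : BunchEq a b) (C : Ctx) :
    BunchEq (C.fill a) (C.fill b) := by
  induction C with
  | hole => exact h
  | semiL C Γ ih => exact .semiCongr ih (.refl _)
  | semiR Γ C ih => exact .semiCongr (.refl _) ih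
  | commaL C Γ ih => exact .commaCongr ih (.refl _)
  | commaR Γ C ih => exact .commaCongr (.refl _) ih

namespace WleM

theorem fill {a b : Bunch} (h : WleM a b) (C : Ctx) : WleM (C.fill a) (C.fill b) := by
  induction h with
  | ofEq e => exact .ofEq (e.fill C)
  | weak D Δ Γ' => simpa only [Ctx.fill_comp] using weak (C.comp D) Δ Γ'
  | munit D Δ => simpa only [Ctx.fill_comp] using munit (C.comp D) Δ
  | trans _ _ ih₁ ih₂ => exact ih₁.trans ih₂

theorem le_comma_mte (Γ : Bunch) (Δ : Option Bunch) : WleM Γ (.comma Γ (mte Δ)) := by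
  cases Δ with
  | none => exact munit .hole Γ
  | some Δ => exact (munit .hole Γ).trans (weak (.commaR Γ .hole) (.fm .mtop) Δ)

theorem reflTransGen_wkEq2Step {a b : Bunch} (h : WleM a b) (H : BI) :
    Relation.ReflTransGen WkEq2Step (a, H) (b, H) := by
  induction h with
  | ofEq e => exact .single (.equiv H e)
  | weak C Δ Γ' => exact .single (.wk C Δ Γ' H)
  | munit C Δ => exact .single (.eq2b C Δ H)
  | trans _ _ ih₁ ih₂ => exact ih₁.trans ih₂

end WleM

theorem Essence.wleM {a b : Bunch} (h : Essence a b) : WleM a b := by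
  induction h with
  | ofEq e => exact .ofEq e
  | insert C Γ' Δ _ ih => exact ih.trans ((WleM.le_comma_mte Γ' Δ).fill C)
  | insertSemi C Γ' Γ'' Δ _ ih =>
    exact ih.trans (((WleM.le_comma_mte Γ' Δ).fill (.semiL .hole Γ'')).fill C)
  | congr _ e ih => exact ih.trans (.ofEq e)

/-- if Γ₂ is an essence of Γ₁ then Γ₁ ⪯ Γ₂ in the preorder
generated by weakening and insertion of multiplicative-unit components;
consequently LBI derives Γ(E(Γ₁)) ⊢ H from Γ(Γ₁) ⊢ H by finitely many Wk L and
EqAnt₂ steps. -/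
theorem essence_reachable_by_wk_eqant2 (Γ₁ Γ₂ : Bunch) (h : Essence Γ₁ Γ₂) :
    WleM Γ₁ Γ₂ ∧
    ∀ (C : Ctx) (H : BI),
      Relation.ReflTransGen WkEq2Step (C.fill Γ₁, H) (C.fill Γ₂, H) :=
  ⟨h.wleM, fun C H => (h.wleM.fill C).reflTransGen_wkEq2Step H⟩
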